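/- arXiv:1205.0472 — 3 statements merged into one kernel-verified Lean document; each statement's English description precedes it below -/
import Mathlib

section
/- The difference operator Δ is a chain map (∂[Δ] = 0) and is idempotent: Δ.Δ = Δ. -/
/-!
`C(x,y,û)` is the Koszul complex over `R[x,y]` of `(xₖ − yₖ)ₖ` in wedge
coordinates; `Δ` is the difference operator `c(x,y,û) ↦ c(x,y,û) − c(y,y,0̂)`.

STATEMENT: `Δ` is a chain map (`∂[Δ] = 0`, i.e. `∂∘Δ = Δ∘∂`) and is
idempotent (`Δ∘Δ = Δ`).
-/

open Finset MvPolynomial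

noncomputable section

variable {σ : Type*} [DecidableEq σ] [LinearOrder σ] [Fintype σ]
variable {A : Type*} [CommRing A]

/-- The Koszul boundary operator: contraction with `∑ i, f i · f̂⋆ⁱ`. -/
def kD (f : σ → A) (c : Finset σ → A) : Finset σ → A :=
  fun S => ∑ i ∈ Sᶜ, (-1 : A) ^ (S.filter (· < i)).card * f i * c (insert i S)

variable (R : Type*) [CommRing R] [Algebra R A]

/-- The Koszul boundary operator as an `R`-linear map. -/
def kDL (f : σ → A) : (Finset σ → A) →ₗ[R] (Finset σ → A) where
  toFun := kD f
  map_add' a b := by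
    funext S
    simp [kD, Pi.add_apply, mul_add, Finset.sum_add_distrib]
  map_smul' r a := by
    funext S
    simp [kD, Pi.smul_apply, Finset.smul_sum, mul_smul_comm]

end

noncomputable section

variable (R : Type*) [CommRing R] (n : ℕ)

/-- `R[x,y]`: polynomials in the variables `x = (xₖ) = X (inl k)` and the
duplicate variables `y = (yₖ) = X (inr k)`. -/
abbrev A2 (R : Type*) [CommRing R] (n : ℕ) := MvPolynomial (Fin n ⊕ Fin n) R

/-- The system `x − y = (xₖ − yₖ)ₖ`; the Koszul complex `C(x,y,û)` is
`Finset (Fin n) → A2 R n` with differential `kD (u R n)`, i.e. `ûₖ ↦ xₖ − yₖ`. -/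
def u : Fin n → A2 R n := fun k => X (Sum.inl k) - X (Sum.inr k)

/-- The substitution `x ↦ y`, `y ↦ y` on `R[x,y]`. -/
def substY : A2 R n →ₐ[R] A2 R n :=
  aeval (fun v => X (Sum.inr (Sum.elim id id v)))

/-- The chain map `σ : c(x,y,û) ↦ c(y,y,0̂)`. -/
def sigOp : (Finset (Fin n) → A2 R n) →ₗ[R] (Finset (Fin n) → A2 R n) where
  toFun c S := if S = ∅ then substY R n (c ∅) else 0
  map_add' a b := by
    funext S
    by_cases h : S = ∅ <;> simp [h]
  map_smul' r a := by
    funext S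
    by_cases h : S = ∅ <;> simp [h]

/-- The difference operator `Δ : c(x,y,û) ↦ c(x,y,û) − c(y,y,0̂)`. -/
def Delta : (Finset (Fin n) → A2 R n) →ₗ[R] (Finset (Fin n) → A2 R n) :=
  LinearMap.id - sigOp R n

end


lemma substY_u (R : Type*) [CommRing R] (n : ℕ) (i : Fin n) :
    substY R n (u R n i) = 0 := by
  simp [substY, u]

lemma substY_substY (R : Type*) [CommRing R] (n : ℕ) (p : A2 R n) :
    substY R n (substY R n p) = substY R n p := by
  induction p using MvPolynomial.induction_on with
  | C a => simp [substY]
  | add p q hp hq => simp [map_add, hp, hq]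
  | mul_X p v hp => rw [map_mul, map_mul, hp]; cases v <;> simp [substY]

lemma kD_sigOp (R : Type*) [CommRing R] (n : ℕ) (c : Finset (Fin n) → A2 R n) :
    kD (u R n) (sigOp R n c) = 0 := by
  funext S
  simp only [kD, sigOp, LinearMap.coe_mk, AddHom.coe_mk, Pi.zero_apply]
  apply Finset.sum_eq_zero
  intro i _
  rw [if_neg (Finset.insert_ne_empty i S)]
  ring

lemma sigOp_kD (R : Type*) [CommRing R] (n : ℕ) (c : Finset (Fin n) → A2 R n) :
    sigOp R n (kD (u R n) c) = 0 := by
  funext S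
  simp only [sigOp, LinearMap.coe_mk, AddHom.coe_mk, Pi.zero_apply]
  split
  · rw [kD, map_sum]
    apply Finset.sum_eq_zero
    intro i _
    simp [map_mul, substY_u]
  · rfl

lemma sigOp_sigOp (R : Type*) [CommRing R] (n : ℕ) (c : Finset (Fin n) → A2 R n) :
    sigOp R n (sigOp R n c) = sigOp R n c := by
  funext S
  simp only [sigOp, LinearMap.coe_mk, AddHom.coe_mk]
  split <;> simp [substY_substY]

/-- The difference operator is an idempotent chain map. -/
theorem difference_operator_chain_map_idempotent (R : Type*) [CommRing R]
    (n : ℕ) (c : Finset (Fin n) → A2 R n) :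
    kD (u R n) (Delta R n c) = Delta R n (kD (u R n) c) ∧
      Delta R n (Delta R n c) = Delta R n c := by
  have hDelta : ∀ d : Finset (Fin n) → A2 R n, Delta R n d = d - sigOp R n d := by
    intro d; rfl
  constructor
  · have hadd : kD (u R n) (Delta R n c)
        = kD (u R n) c - kD (u R n) (sigOp R n c) := by
      rw [hDelta]
      exact map_sub (kDL R (u R n)) c (sigOp R n c)
    rw [hadd, kD_sigOp, sub_zero, hDelta, sigOp_kD, sub_zero]
  · rw [hDelta, hDelta c, map_sub, sigOp_sigOp]
    abel
end

section
/- Any two reduced difference homotopies ∇' and ∇'' differ by a boundary in the Hom-complex: ∇' − ∇'' ∈ B; that is, a reduced difference homotopy is uniquely determined up to homotopy. -/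
/-!
`C(x,y,û)` is the Koszul complex over `R[x,y]` of `(xₖ − yₖ)ₖ`, `Δ` the
difference operator; a difference homotopy is `∇` with `∂∘∇ + ∇∘∂ = Δ`, and it
is reduced if `Δ∘∇ = ∇`.  Some difference homotopy `∇` is assumed to exist.

STATEMENT: two reduced difference homotopies `∇', ∇''` differ by a boundary of
the Hom-complex: `∇' − ∇'' = ∂[H] = ∂∘H − H∘∂` for some (even-degree) `H`;
i.e. a reduced difference homotopy is unique up to homotopy.
-/

open Finset MvPolynomial

/-- A reduced difference homotopy is uniquely determined up to homotopy. -/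
theorem reduced_difference_homotopy_unique_up_to_homotopy
    (R : Type*) [CommRing R] (n : ℕ)
    (N N' N'' : (Finset (Fin n) → A2 R n) →ₗ[R] (Finset (Fin n) → A2 R n))
    (hN : ∀ c, kD (u R n) (N c) + N (kD (u R n) c) = Delta R n c)
    (hN' : ∀ c, kD (u R n) (N' c) + N' (kD (u R n) c) = Delta R n c)
    (hN'' : ∀ c, kD (u R n) (N'' c) + N'' (kD (u R n) c) = Delta R n c)
    (hred' : ∀ c, Delta R n (N' c) = N' c)
    (hred'' : ∀ c, Delta R n (N'' c) = N'' c) :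
    ∃ H : (Finset (Fin n) → A2 R n) →ₗ[R] (Finset (Fin n) → A2 R n),
      ∀ c, N' c - N'' c = kD (u R n) (H c) - H (kD (u R n) c) := by
  refine ⟨N ∘ₗ (N' - N''), fun c => ?_⟩
  have hkD_sub : ∀ a b : Finset (Fin n) → A2 R n,
      kD (u R n) (a - b) = kD (u R n) a - kD (u R n) b := fun a b =>
    map_sub (kDL R (u R n)) a b
  -- anticommutation: kD (N'c - N''c) = -(N' - N'') (kD c)
  have hanti : kD (u R n) (N' c - N'' c)
      = -(N' (kD (u R n) c) - N'' (kD (u R n) c)) := by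
    rw [hkD_sub]
    have := (hN' c).trans (hN'' c).symm
    abel_nf
    abel_nf at this
    linear_combination (norm := abel) this
  have hDelta : N' c - N'' c = Delta R n (N' c - N'' c) := by
    rw [map_sub, hred', hred'']
  calc N' c - N'' c = Delta R n (N' c - N'' c) := hDelta
    _ = kD (u R n) (N (N' c - N'' c)) + N (kD (u R n) (N' c - N'' c)) :=
        (hN _).symm
    _ = kD (u R n) ((N ∘ₗ (N' - N'')) c) - (N ∘ₗ (N' - N'')) (kD (u R n) c) := by
        rw [hanti, map_neg, map_sub]
        simp only [LinearMap.comp_apply, LinearMap.sub_apply, map_sub]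
        abel
end

section
/- If c ∈ Z(x,û) is a cycle and ∇', ∇'' are two reduced difference homotopies, then ∇'.c − ∇''.c ∈ B(x,y,û); i.e., the reduced difference homotopy of a cycle is uniquely determined up to a boundary. -/
/-!
`C(x,y,û)` is the Koszul complex over `R[x,y]` of `(xₖ − yₖ)ₖ`, `Δ` the
difference operator; reduced difference homotopies `∇', ∇''` satisfy
`∂∘∇' + ∇'∘∂ = Δ` and `Δ∘∇' = ∇'`, and some difference homotopy `∇` exists.

STATEMENT: for a cycle `c` (`∂c = 0`), `∇'.c − ∇''.c` is a boundary; i.e. the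
reduced difference homotopy of a cycle is unique up to a boundary.
-/

open Finset MvPolynomial

/-- The reduced difference homotopy of a cycle is unique up to a boundary. -/
theorem reduced_difference_homotopy_of_cycle_unique
    (R : Type*) [CommRing R] (n : ℕ)
    (N N' N'' : (Finset (Fin n) → A2 R n) →ₗ[R] (Finset (Fin n) → A2 R n))
    (hN : ∀ c, kD (u R n) (N c) + N (kD (u R n) c) = Delta R n c)
    (hN' : ∀ c, kD (u R n) (N' c) + N' (kD (u R n) c) = Delta R n c)
    (hN'' : ∀ c, kD (u R n) (N'' c) + N'' (kD (u R n) c) = Delta R n c)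
    (hred' : ∀ c, Delta R n (N' c) = N' c)
    (hred'' : ∀ c, Delta R n (N'' c) = N'' c)
    (c : Finset (Fin n) → A2 R n) (hc : kD (u R n) c = 0) :
    ∃ b, N' c - N'' c = kD (u R n) b := by
  set D := N' c - N'' c with hD
  have hsub : ∀ a b : Finset (Fin n) → A2 R n,
      kD (u R n) (a - b) = kD (u R n) a - kD (u R n) b := fun a b =>
    map_sub (kDL R (u R n)) a b
  have h1 : kD (u R n) (N' c) = Delta R n c := by
    have := hN' c; rw [hc, map_zero, add_zero] at this; exact this
  have h2 : kD (u R n) (N'' c) = Delta R n c := by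
    have := hN'' c; rw [hc, map_zero, add_zero] at this; exact this
  have hcyc : kD (u R n) D = 0 := by
    rw [hD, hsub, h1, h2, sub_self]
  have hDred : Delta R n D = D := by
    rw [hD, map_sub, hred', hred'']
  refine ⟨N D, ?_⟩
  have := hN D
  rw [hcyc, map_zero, add_zero, hDred] at this
  exact this.symm
end
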